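/- arXiv:1509.05902 — 5 statements merged into one kernel-verified Lean document; each statement's English description precedes it below -/
import Mathlib

section
/- Let μ be a nonnegative measure on [0,a] with a > 0, and define ψ(s) = ∫_0^a log(1 + t·s) dμ(t) for s ≥ 0 (assuming the integral is finite). If x, y ∈ ℝ_+^n satisfy e_k(x) ≤ e_k(y) for all k = 1,…,n, then Σ_{i=1}^n ψ(x_i) ≤ Σ_{i=1}^n ψ(y_i). -/
/-! For `t ≥ 0` the generating polynomial `∏ i, (1 + t * x i) = ∑ k, e_k(x) t^k` has
nonnegative powers of `t`, so `e_k(x) ≤ e_k(y)` for all `k` gives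
`∑ i, log (1 + t * x i) ≤ ∑ i, log (1 + t * y i)` pointwise in `t ∈ [0, a]`;
integrating against `μ` yields the inequality for `ψ`. -/

open Finset Real MeasureTheory

noncomputable def esymm (n k : ℕ) (x : Fin n → ℝ) : ℝ :=
  ∑ s ∈ Finset.powersetCard k (Finset.univ : Finset (Fin n)), ∏ i ∈ s, x i

lemma prod_one_add_mul_eq_sum_esymm (n : ℕ) (t : ℝ) (x : Fin n → ℝ) :
    ∏ i, (1 + t * x i) = ∑ k ∈ range (n + 1), esymm n k x * t ^ k := by
  rw [prod_one_add, ← sum_fiberwise_of_maps_to (g := card) (t := range (n + 1))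
    fun s _ => mem_range.2 (Nat.lt_succ_of_le ((card_le_univ s).trans_eq (Fintype.card_fin n)))]
  refine sum_congr rfl fun k _ => ?_
  rw [esymm, sum_mul, ← powersetCard_eq_filter]
  refine sum_congr rfl fun s hs => ?_
  rw [prod_mul_distrib, prod_const, (mem_powersetCard.1 hs).2, mul_comm]

lemma prod_one_add_mul_le_of_esymm_le {n : ℕ} {x y : Fin n → ℝ}
    (hE : ∀ k, 1 ≤ k → k ≤ n → esymm n k x ≤ esymm n k y) {t : ℝ} (ht : 0 ≤ t) :
    ∏ i, (1 + t * x i) ≤ ∏ i, (1 + t * y i) := by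
  rw [prod_one_add_mul_eq_sum_esymm, prod_one_add_mul_eq_sum_esymm]
  refine sum_le_sum fun k hk => ?_
  rcases Nat.eq_zero_or_pos k with rfl | hk1
  · simp [esymm]
  · exact mul_le_mul_of_nonneg_right (hE k hk1 (Nat.lt_succ_iff.1 (mem_range.1 hk)))
      (pow_nonneg ht k)

lemma sum_log_one_add_mul_le_of_esymm_le {n : ℕ} {x y : Fin n → ℝ} (hx : ∀ i, 0 ≤ x i)
    (hy : ∀ i, 0 ≤ y i) (hE : ∀ k, 1 ≤ k → k ≤ n → esymm n k x ≤ esymm n k y)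
    {t : ℝ} (ht : 0 ≤ t) :
    ∑ i, log (1 + t * x i) ≤ ∑ i, log (1 + t * y i) := by
  have hpos : ∀ z : Fin n → ℝ, (∀ i, 0 ≤ z i) → ∀ i, 0 < 1 + t * z i := fun z hz i =>
    add_pos_of_pos_of_nonneg one_pos (mul_nonneg ht (hz i))
  rw [← log_prod fun i _ => (hpos x hx i).ne', ← log_prod fun i _ => (hpos y hy i).ne']
  exact log_le_log (prod_pos fun i _ => hpos x hx i) (prod_one_add_mul_le_of_esymm_le hE ht)

theorem stmt_2_general (n : ℕ) (a : ℝ) (μ : Measure ℝ)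
    (ψ : ℝ → ℝ)
    (hψ : ∀ s : ℝ, 0 ≤ s → ψ s = ∫ t in Set.Icc 0 a, Real.log (1 + t * s) ∂μ)
    (hint : ∀ s : ℝ, 0 ≤ s →
      IntegrableOn (fun t => Real.log (1 + t * s)) (Set.Icc 0 a) μ)
    (x y : Fin n → ℝ) (hx : ∀ i, 0 ≤ x i) (hy : ∀ i, 0 ≤ y i)
    (hE : ∀ k, 1 ≤ k → k ≤ n → esymm n k x ≤ esymm n k y) :
    ∑ i, ψ (x i) ≤ ∑ i, ψ (y i) := by
  have hsum_int : ∀ z : Fin n → ℝ, (∀ i, 0 ≤ z i) →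
      IntegrableOn (fun t => ∑ i, log (1 + t * z i)) (Set.Icc 0 a) μ := fun z hz =>
    integrable_finsetSum _ fun i _ => hint (z i) (hz i)
  have hsum_eq : ∀ z : Fin n → ℝ, (∀ i, 0 ≤ z i) →
      ∑ i, ψ (z i) = ∫ t in Set.Icc 0 a, ∑ i, log (1 + t * z i) ∂μ := fun z hz => by
    rw [integral_finsetSum _ fun i _ => hint (z i) (hz i)]
    exact sum_congr rfl fun i _ => hψ (z i) (hz i)
  rw [hsum_eq x hx, hsum_eq y hy]
  exact setIntegral_mono_on (hsum_int x hx) (hsum_int y hy) measurableSet_Icc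
    fun t ht => sum_log_one_add_mul_le_of_esymm_le hx hy hE ht.1

theorem stmt_2 (n : ℕ) (a : ℝ) (ha : 0 < a) (μ : Measure ℝ)
    (ψ : ℝ → ℝ)
    (hψ : ∀ s : ℝ, 0 ≤ s → ψ s = ∫ t in Set.Icc 0 a, Real.log (1 + t * s) ∂μ)
    (hint : ∀ s : ℝ, 0 ≤ s →
      IntegrableOn (fun t => Real.log (1 + t * s)) (Set.Icc 0 a) μ)
    (x y : Fin n → ℝ) (hx : ∀ i, 0 ≤ x i) (hy : ∀ i, 0 ≤ y i)
    (hE : ∀ k, 1 ≤ k → k ≤ n → esymm n k x ≤ esymm n k y) :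
    ∑ i, ψ (x i) ≤ ∑ i, ψ (y i) :=
  stmt_2_general n a μ ψ hψ hint x y hx hy hE
end

section
/- Let μ be a nonnegative measure on [0,a] with a > 0, and define ψ(s) = ∫_0^a log(t + s) dμ(t) for s ≥ 0 (assuming the integral is finite). If x, y are strictly positive vectors in ℝ^n with e_k(x) ≤ e_k(y) for all k = 1,…,n, then Σ_{i=1}^n ψ(x_i) ≤ Σ_{i=1}^n ψ(y_i). -/
open Finset Real MeasureTheory

/-
For every t ≥ 0 the coefficients of ∏ (t + x i) as a polynomial in t are the e_k(x), so
e_k(x) ≤ e_k(y) gives ∏ (t + x i) ≤ ∏ (t + y i), i.e. ∑ log (t + x i) ≤ ∑ log (t + y i).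
Integrating this against μ over [0, a] gives the inequality for ψ.
-/

lemma esymm_zero (n : ℕ) (z : Fin n → ℝ) : esymm n 0 z = 1 := by
  simp [esymm]

lemma prod_add_eq_sum_esymm_mul_pow (n : ℕ) (z : Fin n → ℝ) (t : ℝ) :
    ∏ i, (t + z i) = ∑ j ∈ range (n + 1), esymm n j z * t ^ (n - j) := by
  simp_rw [add_comm t, prod_add, sum_powerset, card_univ, Fintype.card_fin, esymm, sum_mul]
  refine sum_congr rfl fun j _ => sum_congr rfl fun s hs => ?_
  rw [prod_const, card_sdiff_of_subset (subset_univ s), card_univ, Fintype.card_fin,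
    (mem_powersetCard.mp hs).2]

lemma prod_add_le_prod_add_of_esymm_le {n : ℕ} {x y : Fin n → ℝ}
    (hE : ∀ k, 1 ≤ k → k ≤ n → esymm n k x ≤ esymm n k y) {t : ℝ} (ht : 0 ≤ t) :
    ∏ i, (t + x i) ≤ ∏ i, (t + y i) := by
  rw [prod_add_eq_sum_esymm_mul_pow, prod_add_eq_sum_esymm_mul_pow]
  refine sum_le_sum fun j hj => ?_
  rcases Nat.eq_zero_or_pos j with rfl | hj_pos
  · rw [esymm_zero, esymm_zero]
  · exact mul_le_mul_of_nonneg_right (hE j hj_pos (Nat.lt_succ_iff.mp (mem_range.mp hj)))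
      (pow_nonneg ht _)

lemma sum_log_add_le_of_esymm_le {n : ℕ} {x y : Fin n → ℝ} (hx : ∀ i, 0 < x i)
    (hy : ∀ i, 0 < y i) (hE : ∀ k, 1 ≤ k → k ≤ n → esymm n k x ≤ esymm n k y) {t : ℝ}
    (ht : 0 ≤ t) : ∑ i, log (t + x i) ≤ ∑ i, log (t + y i) := by
  have hx_pos : ∀ i, 0 < t + x i := fun i => add_pos_of_nonneg_of_pos ht (hx i)
  have hy_pos : ∀ i, 0 < t + y i := fun i => add_pos_of_nonneg_of_pos ht (hy i)
  rw [← log_prod fun i _ => (hx_pos i).ne', ← log_prod fun i _ => (hy_pos i).ne']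
  exact log_le_log (prod_pos fun i _ => hx_pos i) (prod_add_le_prod_add_of_esymm_le hE ht)

lemma sum_setIntegral_log_add_le_of_esymm_le {n : ℕ} {μ : Measure ℝ} {s : Set ℝ}
    (hs : MeasurableSet s) (hs_nonneg : ∀ t ∈ s, 0 ≤ t) {x y : Fin n → ℝ}
    (hx : ∀ i, 0 < x i) (hy : ∀ i, 0 < y i)
    (hint_x : ∀ i, IntegrableOn (fun t => log (t + x i)) s μ)
    (hint_y : ∀ i, IntegrableOn (fun t => log (t + y i)) s μ)
    (hE : ∀ k, 1 ≤ k → k ≤ n → esymm n k x ≤ esymm n k y) :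
    ∑ i, ∫ t in s, log (t + x i) ∂μ ≤ ∑ i, ∫ t in s, log (t + y i) ∂μ := by
  rw [← integral_finsetSum _ fun i _ => hint_x i, ← integral_finsetSum _ fun i _ => hint_y i]
  exact setIntegral_mono_on (integrable_finsetSum _ fun i _ => hint_x i)
    (integrable_finsetSum _ fun i _ => hint_y i) hs
    fun t ht => sum_log_add_le_of_esymm_le hx hy hE (hs_nonneg t ht)

theorem stmt_3_general (n : ℕ) (a : ℝ) (μ : Measure ℝ)
    (ψ : ℝ → ℝ)
    (hψ : ∀ s : ℝ, 0 ≤ s → ψ s = ∫ t in Set.Icc 0 a, Real.log (t + s) ∂μ)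
    (hint : ∀ s : ℝ, 0 ≤ s →
      IntegrableOn (fun t => Real.log (t + s)) (Set.Icc 0 a) μ)
    (x y : Fin n → ℝ) (hx : ∀ i, 0 < x i) (hy : ∀ i, 0 < y i)
    (hE : ∀ k, 1 ≤ k → k ≤ n → esymm n k x ≤ esymm n k y) :
    ∑ i, ψ (x i) ≤ ∑ i, ψ (y i) := by
  simp_rw [fun i => hψ (x i) (hx i).le, fun i => hψ (y i) (hy i).le]
  exact sum_setIntegral_log_add_le_of_esymm_le measurableSet_Icc (fun t ht => ht.1) hx hy
    (fun i => hint (x i) (hx i).le) (fun i => hint (y i) (hy i).le) hE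

theorem stmt_3 (n : ℕ) (a : ℝ) (ha : 0 < a) (μ : Measure ℝ)
    (ψ : ℝ → ℝ)
    (hψ : ∀ s : ℝ, 0 ≤ s → ψ s = ∫ t in Set.Icc 0 a, Real.log (t + s) ∂μ)
    (hint : ∀ s : ℝ, 0 ≤ s →
      IntegrableOn (fun t => Real.log (t + s)) (Set.Icc 0 a) μ)
    (x y : Fin n → ℝ) (hx : ∀ i, 0 < x i) (hy : ∀ i, 0 < y i)
    (hE : ∀ k, 1 ≤ k → k ≤ n → esymm n k x ≤ esymm n k y) :
    ∑ i, ψ (x i) ≤ ∑ i, ψ (y i) :=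
  stmt_3_general n a μ ψ hψ hint x y hx hy hE
end

section
/- For every x > 0, (log x)^2 = ∫_0^∞ log( (1 + t·x)(t + x) / (x·(1 + t)^2) ) · (1/t) dt, and this improper integral converges. -/
/-!
With `k s t = 1 / (1 + s t) - 1 / (s (s + t))`, the integrand at `t` is `∫₁ˣ k s t ds`, while
`∫₀^∞ k s t dt = 2 log s / s`, the `t`-antiderivative `(log (1 + s t) - log (s + t)) / s` tending
to `log s / s` at infinity. For `s ≥ 1` the kernel is nonnegative, so it is integrable on
`[1, x] × (0, ∞)` and Fubini gives `∫₁ˣ 2 log s / s ds = (log x)²`. The case `x < 1` reduces to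
`1 / x`, since the integrand is invariant under `x ↦ 1 / x`.
-/

open Real MeasureTheory Set Filter Topology

lemma pos_of_mem_uIcc {a b s : ℝ} (ha : 0 < a) (hb : 0 < b) (hs : s ∈ uIcc a b) : 0 < s :=
  (lt_min ha hb).trans_le hs.1

noncomputable def logSqKernel (s t : ℝ) : ℝ := 1 / (1 + s * t) - 1 / (s * (s + t))

noncomputable def logSqIntegrand (x t : ℝ) : ℝ :=
  log ((1 + t * x) * (t + x) / (x * (1 + t) ^ 2)) * (1 / t)

lemma logSqKernel_nonneg {s t : ℝ} (hs : 1 ≤ s) (ht : 0 ≤ t) : 0 ≤ logSqKernel s t := by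
  have hs₀ : 0 < s := one_pos.trans_le hs
  have hclosed : logSqKernel s t = (s ^ 2 - 1) / (s * (1 + s * t) * (s + t)) := by
    unfold logSqKernel
    field_simp
    ring
  have : 0 ≤ s ^ 2 - 1 := by nlinarith
  rw [hclosed]
  positivity

lemma hasDerivAt_log_sub_log_div {s t : ℝ} (hs : 0 < s) (ht : 0 ≤ t) :
    HasDerivAt (fun u => (log (1 + s * u) - log (s + u)) / s) (logSqKernel s t) t := by
  have h₁ : 0 < 1 + s * t := by positivity
  have h₂ : 0 < s + t := by positivity
  have hd := ((((hasDerivAt_id' t).const_mul s).const_add 1).log h₁.ne').sub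
    (((hasDerivAt_id' t).const_add s).log h₂.ne') |>.div_const s
  refine hd.congr_deriv ?_
  unfold logSqKernel
  field_simp

lemma tendsto_log_sub_log_div_atTop {s : ℝ} (hs : 0 < s) :
    Tendsto (fun t => (log (1 + s * t) - log (s + t)) / s) atTop (𝓝 (log s / s)) := by
  have hratio : Tendsto (fun t => s + (1 - s ^ 2) / (s + t)) atTop (𝓝 s) := by
    simpa using tendsto_const_nhds.add
      (tendsto_const_nhds.div_atTop (tendsto_atTop_add_const_left _ s tendsto_id))
  have hlog := ((continuousAt_log hs.ne').tendsto.comp hratio).div_const s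
  refine hlog.congr' ?_
  filter_upwards [eventually_gt_atTop 0] with t ht
  have h₂ : 0 < s + t := by positivity
  rw [Function.comp_apply, ← log_div (by positivity) h₂.ne']
  congr 2
  field_simp
  ring

lemma integrableOn_Ioi_logSqKernel {s : ℝ} (hs : 1 ≤ s) :
    IntegrableOn (logSqKernel s) (Ioi 0) :=
  have hs₀ : 0 < s := one_pos.trans_le hs
  integrableOn_Ioi_deriv_of_nonneg' (fun _ ht => hasDerivAt_log_sub_log_div hs₀ ht)
    (fun _ ht => logSqKernel_nonneg hs (le_of_lt ht)) (tendsto_log_sub_log_div_atTop hs₀)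

lemma integral_Ioi_logSqKernel {s : ℝ} (hs : 1 ≤ s) :
    ∫ t in Ioi 0, logSqKernel s t = 2 * log s / s := by
  have hs₀ : 0 < s := one_pos.trans_le hs
  rw [integral_Ioi_of_hasDerivAt_of_nonneg' (fun _ ht => hasDerivAt_log_sub_log_div hs₀ ht)
    (fun _ ht => logSqKernel_nonneg hs (le_of_lt ht)) (tendsto_log_sub_log_div_atTop hs₀)]
  simp only [mul_zero, add_zero, log_one]
  ring

lemma hasDerivAt_log_add_log_sub_log_div {s t : ℝ} (hs : 0 < s) (ht : 0 < t) :
    HasDerivAt (fun v => (log (1 + v * t) + log (v + t) - log v) / t) (logSqKernel s t) s := by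
  have h₁ : 0 < 1 + s * t := by positivity
  have h₂ : 0 < s + t := by positivity
  have hd := (((((hasDerivAt_id' s).mul_const t).const_add 1).log h₁.ne').add
    (((hasDerivAt_id' s).add_const t).log h₂.ne')).sub (hasDerivAt_log hs.ne') |>.div_const t
  refine hd.congr_deriv ?_
  unfold logSqKernel
  field_simp
  ring

lemma integral_logSqKernel_fst {t x : ℝ} (ht : 0 < t) (hx : 0 < x) :
    ∫ s in 1..x, logSqKernel s t = logSqIntegrand x t := by
  have hpos : ∀ s ∈ uIcc 1 x, 0 < s := fun _ => pos_of_mem_uIcc one_pos hx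
  have hcont : ContinuousOn (fun s => logSqKernel s t) (uIcc 1 x) := by
    unfold logSqKernel
    fun_prop (disch := intro s hs; have := hpos s hs; positivity)
  rw [intervalIntegral.integral_eq_sub_of_hasDerivAt
    (fun s hs => hasDerivAt_log_add_log_sub_log_div (hpos s hs) ht) hcont.intervalIntegrable]
  unfold logSqIntegrand
  rw [log_div (by positivity) (by positivity), log_mul (by positivity) (by positivity),
    log_mul hx.ne' (by positivity), log_pow]
  simp only [one_mul, log_one, sub_zero, mul_comm t x, add_comm t x, Nat.cast_ofNat]
  field_simp
  ring

lemma intervalIntegrable_two_mul_log_div_self {x : ℝ} (hx : 0 < x) :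
    IntervalIntegrable (fun s => 2 * log s / s) volume 1 x := by
  have hpos : ∀ s ∈ uIcc 1 x, 0 < s := fun _ => pos_of_mem_uIcc one_pos hx
  have hcont : ContinuousOn (fun s => 2 * log s / s) (uIcc 1 x) := by
    fun_prop (disch := intro s hs; exact (hpos s hs).ne')
  exact hcont.intervalIntegrable

lemma integral_two_mul_log_div_self {x : ℝ} (hx : 0 < x) :
    ∫ s in 1..x, 2 * log s / s = log x ^ 2 := by
  have hpos : ∀ s ∈ uIcc 1 x, 0 < s := fun _ => pos_of_mem_uIcc one_pos hx
  have hderiv : ∀ s ∈ uIcc 1 x, HasDerivAt (fun u => log u ^ 2) (2 * log s / s) s := by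
    intro s hs
    refine ((hasDerivAt_log (hpos s hs).ne').pow 2).congr_deriv ?_
    simp only [Nat.cast_ofNat]
    ring
  rw [intervalIntegral.integral_eq_sub_of_hasDerivAt hderiv
    (intervalIntegrable_two_mul_log_div_self hx)]
  simp

lemma logSqIntegrand_inv (x : ℝ) : logSqIntegrand x⁻¹ = logSqIntegrand x := by
  rcases eq_or_ne x 0 with rfl | hx
  · simp
  ext t
  unfold logSqIntegrand
  congr 2
  field_simp
  ring

lemma integrable_logSqKernel_prod {x : ℝ} (hx : 1 ≤ x) :
    Integrable (Function.uncurry logSqKernel)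
      ((volume.restrict (uIoc 1 x)).prod (volume.restrict (Ioi 0))) := by
  have hmeas : Measurable (Function.uncurry logSqKernel) := by
    unfold logSqKernel
    fun_prop
  have hs : ∀ᵐ s ∂volume.restrict (uIoc 1 x), 1 ≤ s := by
    filter_upwards [ae_restrict_mem measurableSet_uIoc] with s hs
    exact (uIoc_of_le hx ▸ hs).1.le
  rw [integrable_prod_iff hmeas.aestronglyMeasurable]
  refine ⟨hs.mono fun s hs => integrableOn_Ioi_logSqKernel hs, ?_⟩
  refine (intervalIntegrable_two_mul_log_div_self (one_pos.trans_le hx)).def'.congr ?_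
  filter_upwards [hs] with s hs
  rw [← integral_Ioi_logSqKernel hs]
  exact setIntegral_congr_fun measurableSet_Ioi fun t ht =>
    (norm_of_nonneg (logSqKernel_nonneg hs (le_of_lt ht))).symm

lemma integrableOn_logSqIntegrand_of_one_le {x : ℝ} (hx : 1 ≤ x) :
    IntegrableOn (logSqIntegrand x) (Ioi 0) := by
  refine IntegrableOn.congr_fun (integrable_logSqKernel_prod hx).integral_prod_right
    (fun t ht => ?_) measurableSet_Ioi
  rw [← integral_logSqKernel_fst ht (one_pos.trans_le hx), intervalIntegral.integral_of_le hx,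
    uIoc_of_le hx]
  rfl

lemma integral_logSqIntegrand_of_one_le {x : ℝ} (hx : 1 ≤ x) :
    ∫ t in Ioi 0, logSqIntegrand x t = log x ^ 2 := calc
  ∫ t in Ioi 0, logSqIntegrand x t = ∫ t in Ioi 0, ∫ s in 1..x, logSqKernel s t :=
    setIntegral_congr_fun measurableSet_Ioi fun _ ht =>
      (integral_logSqKernel_fst ht (one_pos.trans_le hx)).symm
  _ = ∫ s in 1..x, ∫ t in Ioi 0, logSqKernel s t :=
    (intervalIntegral_integral_swap (integrable_logSqKernel_prod hx)).symm
  _ = ∫ s in 1..x, 2 * log s / s :=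
    intervalIntegral.integral_congr fun _ hs =>
      integral_Ioi_logSqKernel (uIcc_of_le hx ▸ hs).1
  _ = log x ^ 2 := integral_two_mul_log_div_self (one_pos.trans_le hx)

lemma integrableOn_logSqIntegrand {x : ℝ} (hx : 0 < x) :
    IntegrableOn (logSqIntegrand x) (Ioi 0) := by
  rcases le_total 1 x with h | h
  · exact integrableOn_logSqIntegrand_of_one_le h
  · simpa [logSqIntegrand_inv] using
      integrableOn_logSqIntegrand_of_one_le ((one_le_inv₀ hx).2 h)

lemma integral_logSqIntegrand {x : ℝ} (hx : 0 < x) :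
    ∫ t in Ioi 0, logSqIntegrand x t = log x ^ 2 := by
  rcases le_total 1 x with h | h
  · exact integral_logSqIntegrand_of_one_le h
  · simpa [logSqIntegrand_inv] using
      integral_logSqIntegrand_of_one_le ((one_le_inv₀ hx).2 h)

theorem stmt_4 (x : ℝ) (hx : 0 < x) :
    IntegrableOn
      (fun t => Real.log ((1 + t * x) * (t + x) / (x * (1 + t) ^ 2)) * (1 / t))
      (Set.Ioi (0 : ℝ)) volume ∧
    (Real.log x) ^ 2 =
      ∫ t in Set.Ioi (0 : ℝ),
        Real.log ((1 + t * x) * (t + x) / (x * (1 + t) ^ 2)) * (1 / t) :=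
  ⟨integrableOn_logSqIntegrand hx, (integral_logSqIntegrand hx).symm⟩
end

section
/- For 1 < α < 2 and s ≥ 0, s^α = (α·sin(απ)/π) · ∫_0^∞ (log(1 + t·s) − t·s) · t^{−α−1} dt, and the integral converges. -/
/-!
Substituting `u = t s` turns the integral into `s ^ α · I(α)` with
`I(α) = ∫₀^∞ (log (1 + u) - u) u ^ (-α - 1) du`, which converges because
`log (1 + u) - u` is `O(u²)` at `0` and `O(u)` at `∞`. Integrating by parts against
`-u ^ (-α) / α` (the same bounds kill the boundary terms) gives
`I(α) = -α⁻¹ ∫₀^∞ u ^ (1 - α) / (1 + u) du`, and `x ↦ x / (1 - x)` maps this onto the Beta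
integral `B(2 - α, α - 1) = Γ(2 - α) Γ(α - 1) = π / sin (π (2 - α)) = -π / sin (α π)`.
-/

open Real MeasureTheory Set Filter Topology

theorem abs_log_one_add_sub_self_le_sq {u : ℝ} (hu : 0 ≤ u) : |log (1 + u) - u| ≤ u ^ 2 := by
  have h1u : 0 < 1 + u := by linarith
  rw [abs_sub_comm, abs_of_nonneg (by linarith [log_le_sub_one_of_pos h1u])]
  calc u - log (1 + u) ≤ u - (1 - (1 + u)⁻¹) := by linarith [one_sub_inv_le_log_of_pos h1u]
    _ = u ^ 2 / (1 + u) := by field_simp; ring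
    _ ≤ u ^ 2 := div_le_self (sq_nonneg u) (by linarith)

theorem abs_log_one_add_sub_self_le {u : ℝ} (hu : 0 ≤ u) : |log (1 + u) - u| ≤ u := by
  have hupper := log_le_sub_one_of_pos (by linarith : 0 < 1 + u)
  have hpos := log_nonneg (by linarith : 1 ≤ 1 + u)
  rw [abs_sub_comm, abs_of_nonneg (by linarith)]
  linarith

theorem integrableOn_Ioi_zero_of_norm_le_rpow {E : Type*} [NormedAddCommGroup E] {f : ℝ → E}
    {a b : ℝ} (ha : -1 < a) (hb : b < -1) (hf : ContinuousOn f (Ioi 0))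
    (h_zero : ∀ u ∈ Ioc (0 : ℝ) 1, ‖f u‖ ≤ u ^ a) (h_top : ∀ u ∈ Ioi (1 : ℝ), ‖f u‖ ≤ u ^ b) :
    IntegrableOn f (Ioi 0) := by
  have h_Ioc : IntegrableOn f (Ioc 0 1) :=
    Integrable.mono'
      ((intervalIntegrable_iff_integrableOn_Ioc_of_le zero_le_one).mp
        (intervalIntegral.intervalIntegrable_rpow' ha))
      ((hf.mono Ioc_subset_Ioi_self).aestronglyMeasurable measurableSet_Ioc)
      ((ae_restrict_iff' measurableSet_Ioc).mpr (ae_of_all _ h_zero))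
  have h_Ioi : IntegrableOn f (Ioi 1) :=
    Integrable.mono' (integrableOn_Ioi_rpow_of_lt hb one_pos)
      ((hf.mono (Ioi_subset_Ioi zero_le_one)).aestronglyMeasurable measurableSet_Ioi)
      ((ae_restrict_iff' measurableSet_Ioi).mpr (ae_of_all _ h_top))
  simpa only [Ioc_union_Ioi_eq_Ioi zero_le_one] using h_Ioc.union h_Ioi

theorem integrableOn_log_one_add_sub_self_mul_rpow {α : ℝ} (hα : 1 < α) (hα2 : α < 2) :
    IntegrableOn (fun u : ℝ => (log (1 + u) - u) * u ^ (-α - 1)) (Ioi 0) := by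
  refine integrableOn_Ioi_zero_of_norm_le_rpow (a := 1 - α) (b := -α) (by linarith) (by linarith)
    ?_ (fun u hu => ?_) (fun u hu => ?_)
  · intro u (hu : 0 < u)
    apply ContinuousAt.continuousWithinAt
    fun_prop (disch := first | exact Or.inl (by positivity) | positivity)
  · have hu0 : 0 < u := hu.1
    calc ‖(log (1 + u) - u) * u ^ (-α - 1)‖ ≤ u ^ 2 * u ^ (-α - 1) := by
          rw [norm_mul, norm_of_nonneg (rpow_nonneg hu0.le _)]
          exact mul_le_mul_of_nonneg_right (abs_log_one_add_sub_self_le_sq hu0.le) (by positivity)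
      _ = u ^ (1 - α) := by
          rw [← rpow_natCast, ← rpow_add hu0]; norm_num; ring_nf
  · have hu0 : 0 < u := one_pos.trans hu
    calc ‖(log (1 + u) - u) * u ^ (-α - 1)‖ ≤ u * u ^ (-α - 1) := by
          rw [norm_mul, norm_of_nonneg (rpow_nonneg hu0.le _)]
          exact mul_le_mul_of_nonneg_right (abs_log_one_add_sub_self_le hu0.le) (by positivity)
      _ = u ^ (-α) := by
          rw [← rpow_one_add' hu0.le (by linarith)]; ring_nf

theorem integrableOn_rpow_div_one_add_rpow {p q : ℝ} (hp : 0 < p) (hq : 0 < q) :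
    IntegrableOn (fun u : ℝ => u ^ (p - 1) / (1 + u) ^ (p + q)) (Ioi 0) := by
  refine integrableOn_Ioi_zero_of_norm_le_rpow (a := p - 1) (b := -q - 1) (by linarith)
    (by linarith) ?_ (fun u hu => ?_) (fun u hu => ?_)
  · intro u (hu : 0 < u)
    apply ContinuousAt.continuousWithinAt
    fun_prop (disch := first | exact Or.inl (by positivity) | positivity)
  · have hu0 : 0 < u := hu.1
    rw [norm_of_nonneg (by positivity)]
    exact div_le_self (by positivity) (one_le_rpow (by linarith) (by linarith))
  · have hu0 : 0 < u := one_pos.trans hu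
    rw [norm_of_nonneg (by positivity)]
    calc u ^ (p - 1) / (1 + u) ^ (p + q) ≤ u ^ (p - 1) / u ^ (p + q) := by
          gcongr; linarith
      _ = u ^ (-q - 1) := by rw [← rpow_sub hu0]; ring_nf

theorem integral_Ioo_rpow_mul_one_sub_rpow {p q : ℝ} (hp : 0 < p) (hq : 0 < q) :
    ∫ x in Ioo (0 : ℝ) 1, x ^ (p - 1) * (1 - x) ^ (q - 1) = Gamma p * Gamma q / Gamma (p + q) := by
  have hbeta : Complex.betaIntegral p q
      = ((∫ x in Ioo (0 : ℝ) 1, x ^ (p - 1) * (1 - x) ^ (q - 1) : ℝ) : ℂ) := by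
    rw [Complex.betaIntegral, intervalIntegral.integral_of_le zero_le_one,
      integral_Ioc_eq_integral_Ioo, ← integral_complex_ofReal]
    refine setIntegral_congr_fun measurableSet_Ioo fun x hx => ?_
    rw [Complex.ofReal_mul, Complex.ofReal_cpow hx.1.le,
      Complex.ofReal_cpow (sub_nonneg.mpr hx.2.le)]
    push_cast
    rfl
  have hGamma := Complex.Gamma_mul_Gamma_eq_betaIntegral (s := p) (t := q)
    (by simpa using hp) (by simpa using hq)
  rw [eq_div_iff (Gamma_pos_of_pos (add_pos hp hq)).ne']
  apply Complex.ofReal_injective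
  push_cast
  rw [← hbeta, ← Complex.Gamma_ofReal, ← Complex.Gamma_ofReal, ← Complex.Gamma_ofReal, hGamma]
  push_cast
  ring

theorem integral_Ioi_rpow_div_one_add_rpow {p q : ℝ} (hp : 0 < p) (hq : 0 < q) :
    ∫ u in Ioi (0 : ℝ), u ^ (p - 1) / (1 + u) ^ (p + q) = Gamma p * Gamma q / Gamma (p + q) := by
  have hsub : ∀ x ∈ Ioo (0 : ℝ) 1, 1 - x ≠ 0 := fun x hx => (sub_pos.mpr hx.2).ne'
  have himage : (fun x : ℝ => x / (1 - x)) '' Ioo 0 1 = Ioi 0 := by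
    ext u
    simp only [mem_image, mem_Ioo, mem_Ioi]
    constructor
    · rintro ⟨x, ⟨hx0, hx1⟩, rfl⟩
      exact div_pos hx0 (by linarith)
    · intro hu
      refine ⟨u / (1 + u), ⟨by positivity, by rw [div_lt_one (by linarith)]; linarith⟩, ?_⟩
      field_simp
      ring
  have hderiv : ∀ x ∈ Ioo (0 : ℝ) 1,
      HasDerivWithinAt (fun x : ℝ => x / (1 - x)) (1 / (1 - x) ^ 2) (Ioo 0 1) x := by
    intro x hx
    refine (((hasDerivAt_id x).div ((hasDerivAt_id x).const_sub 1) (hsub x hx)).congr_deriv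
      ?_).hasDerivWithinAt
    simp only [id]
    field_simp
    ring
  have hinj : InjOn (fun x : ℝ => x / (1 - x)) (Ioo 0 1) := by
    intro x hx y hy hxy
    field_simp [hsub x hx, hsub y hy] at hxy
    linarith
  rw [← himage, integral_image_eq_integral_abs_deriv_smul measurableSet_Ioo hderiv hinj,
    ← integral_Ioo_rpow_mul_one_sub_rpow hp hq]
  refine setIntegral_congr_fun measurableSet_Ioo fun x hx => ?_
  have hx0 : 0 < x := hx.1
  have h1x : 0 < 1 - x := sub_pos.mpr hx.2
  have hbase : 1 + x / (1 - x) = (1 - x)⁻¹ := by field_simp; ring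
  have hexp : (1 - x) ^ (p + q) = (1 - x) ^ (p - 1) * (1 - x) ^ (q - 1) * (1 - x) ^ 2 := by
    rw [← rpow_natCast, ← rpow_add h1x, ← rpow_add h1x]; norm_num; ring_nf
  rw [smul_eq_mul, abs_of_pos (by positivity), hbase, div_rpow hx0.le h1x.le,
    inv_rpow h1x.le, hexp]
  field_simp

theorem tendsto_log_one_add_sub_self_mul_rpow_nhdsGT_zero {α : ℝ} (hα : α < 2) :
    Tendsto (fun u : ℝ => (log (1 + u) - u) * u ^ (-α)) (𝓝[>] 0) (𝓝 0) := by
  have hbound : Tendsto (fun u : ℝ => u ^ (2 - α)) (𝓝[>] 0) (𝓝 0) := by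
    simpa [zero_rpow (by linarith : 2 - α ≠ 0)] using
      ((continuousAt_rpow_const 0 (2 - α) (Or.inr (by linarith))).tendsto).mono_left
        nhdsWithin_le_nhds
  refine squeeze_zero_norm' ?_ hbound
  filter_upwards [self_mem_nhdsWithin] with u (hu : 0 < u)
  calc ‖(log (1 + u) - u) * u ^ (-α)‖ ≤ u ^ 2 * u ^ (-α) := by
        rw [norm_mul, norm_of_nonneg (rpow_nonneg hu.le _)]
        exact mul_le_mul_of_nonneg_right (abs_log_one_add_sub_self_le_sq hu.le) (by positivity)
    _ = u ^ (2 - α) := by rw [← rpow_natCast, ← rpow_add hu]; norm_num; ring_nf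

theorem tendsto_log_one_add_sub_self_mul_rpow_atTop {α : ℝ} (hα : 1 < α) :
    Tendsto (fun u : ℝ => (log (1 + u) - u) * u ^ (-α)) atTop (𝓝 0) := by
  have hbound : Tendsto (fun u : ℝ => u ^ (1 - α)) atTop (𝓝 0) := by
    simpa using tendsto_rpow_neg_atTop (by linarith : 0 < α - 1)
  refine squeeze_zero_norm' ?_ hbound
  filter_upwards [eventually_gt_atTop 0] with u hu
  calc ‖(log (1 + u) - u) * u ^ (-α)‖ ≤ u * u ^ (-α) := by
        rw [norm_mul, norm_of_nonneg (rpow_nonneg hu.le _)]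
        exact mul_le_mul_of_nonneg_right (abs_log_one_add_sub_self_le hu.le) (by positivity)
    _ = u ^ (1 - α) := by rw [← rpow_one_add' hu.le (by linarith)]; ring_nf

theorem sin_mul_pi_neg {α : ℝ} (hα : 1 < α) (hα2 : α < 2) : sin (α * π) < 0 := by
  have h := sin_pos_of_pos_of_lt_pi (x := α * π - π) (by nlinarith [pi_pos]) (by nlinarith [pi_pos])
  rw [sin_sub_pi] at h
  linarith

theorem integral_log_one_add_sub_self_mul_rpow {α : ℝ} (hα : 1 < α) (hα2 : α < 2) :
    ∫ u in Ioi (0 : ℝ), (log (1 + u) - u) * u ^ (-α - 1) = π / (α * sin (α * π)) := by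
  set U : ℝ → ℝ := fun u => log (1 + u) - u
  set V : ℝ → ℝ := fun u => -α⁻¹ * u ^ (-α)
  have hU : ∀ x ∈ Ioi (0 : ℝ), HasDerivAt U (-(x / (1 + x))) x := by
    intro x (hx : 0 < x)
    have h1x : 1 + x ≠ 0 := by positivity
    refine ((((hasDerivAt_id x).const_add 1).log h1x).sub (hasDerivAt_id x)).congr_deriv ?_
    simp only [id]
    field_simp
    ring
  have hV : ∀ x ∈ Ioi (0 : ℝ), HasDerivAt V (x ^ (-α - 1)) x := by
    intro x (hx : 0 < x)
    refine ((hasDerivAt_rpow_const (Or.inl hx.ne')).const_mul (-α⁻¹)).congr_deriv ?_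
    field_simp
  have hU'V : EqOn (fun x => -(x / (1 + x)) * V x)
      (fun x => α⁻¹ * (x ^ (2 - α - 1) / (1 + x) ^ (2 - α + (α - 1)))) (Ioi 0) := by
    intro x (hx : 0 < x)
    have hpow : x ^ (2 - α - 1) = x * x ^ (-α) := by
      rw [← rpow_one_add' hx.le (by linarith)]; ring_nf
    simp only [V, hpow, show 2 - α + (α - 1) = 1 by ring, rpow_one]
    ring
  have hlimit : ∀ l, Tendsto (fun u => (log (1 + u) - u) * u ^ (-α)) l (𝓝 0) →
      Tendsto (U * V) l (𝓝 0) := fun l h => by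
    simpa only [mul_zero] using (h.const_mul (-α⁻¹)).congr fun u => by
      simp only [U, V, Pi.mul_apply]; ring
  have hU'V_int : IntegrableOn (fun x => -(x / (1 + x)) * V x) (Ioi 0) :=
    IntegrableOn.congr_fun
      ((integrableOn_rpow_div_one_add_rpow (by linarith) (by linarith)).const_mul _)
      hU'V.symm measurableSet_Ioi
  rw [integral_Ioi_mul_deriv_eq_deriv_mul hU hV
      (integrableOn_log_one_add_sub_self_mul_rpow hα hα2) hU'V_int
      (hlimit _ (tendsto_log_one_add_sub_self_mul_rpow_nhdsGT_zero hα2))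
      (hlimit _ (tendsto_log_one_add_sub_self_mul_rpow_atTop hα)),
    setIntegral_congr_fun measurableSet_Ioi hU'V, integral_const_mul,
    integral_Ioi_rpow_div_one_add_rpow (by linarith) (by linarith),
    show α - 1 = 1 - (2 - α) by ring, show 2 - α + (1 - (2 - α)) = 1 by ring, Gamma_one, div_one,
    Gamma_mul_Gamma_one_sub, show π * (2 - α) = 2 * π - α * π by ring, sin_two_pi_sub]
  field_simp
  ring

theorem stmt_7 (α s : ℝ) (hα : 1 < α) (hα2 : α < 2) (hs : 0 ≤ s) :
    IntegrableOn (fun t : ℝ => (Real.log (1 + t * s) - t * s) * t ^ (-α - 1))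
      (Set.Ioi (0 : ℝ)) volume ∧
    s ^ α = (α * Real.sin (α * Real.pi) / Real.pi) *
      ∫ t in Set.Ioi (0 : ℝ), (Real.log (1 + t * s) - t * s) * t ^ (-α - 1) := by
  rcases hs.eq_or_lt with rfl | hs_pos
  · simp [zero_rpow (by linarith : α ≠ 0)]
  have hscale : EqOn (fun t => (log (1 + t * s) - t * s) * t ^ (-α - 1))
      (fun t => s ^ (α + 1) * ((log (1 + s * t) - s * t) * (s * t) ^ (-α - 1))) (Ioi 0) := by
    intro t (ht : 0 < t)
    dsimp only
    rw [mul_rpow hs_pos.le ht.le, mul_comm s t, mul_left_comm, ← mul_assoc (s ^ (α + 1)),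
      ← rpow_add hs_pos]
    norm_num
  have hscaled_int := (integrableOn_Ioi_comp_mul_left_iff _ 0 hs_pos).mpr
    (by simpa using integrableOn_log_one_add_sub_self_mul_rpow hα hα2)
  refine ⟨IntegrableOn.congr_fun (hscaled_int.const_mul _) hscale.symm measurableSet_Ioi, ?_⟩
  rw [setIntegral_congr_fun measurableSet_Ioi hscale, integral_const_mul,
    integral_comp_mul_left_Ioi (fun u => (log (1 + u) - u) * u ^ (-α - 1)) 0 hs_pos, mul_zero,
    integral_log_one_add_sub_self_mul_rpow hα hα2, smul_eq_mul, rpow_add hs_pos, rpow_one]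
  have hsin := (sin_mul_pi_neg hα hα2).ne
  field_simp
end

section
/- Let x ∈ ℝ^n be a vector of distinct positive numbers with Σ_i x_i = 1. Then the subentropy Q(x) = −Σ_{i=1}^n (x_i^n / ∏_{j≠i}(x_i − x_j)) log x_i satisfies Q(x) = −∫_0^∞ [ t^n / ∏_{j=1}^n (t + x_j) − t/(1+t) ] dt. -/
open Finset Real MeasureTheory

/-- Subentropy of a vector with pairwise distinct entries. -/
noncomputable def subentropy (n : ℕ) (x : Fin n → ℝ) : ℝ :=
  -∑ i, (x i ^ n / ∏ j ∈ Finset.univ.erase i, (x i - x j)) * Real.log (x i)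

/-!
Write `c i = x i ^ n / ∏_{j ≠ i} (x i - x j)`. The polynomial `X ^ n - ∏ j, (X - x j)` has degree
`< n` and equals `X ^ n` at the distinct nodes `x i`; its Lagrange interpolation gives the partial
fraction expansion `t ^ n / ∏ j, (t + x j) = 1 - ∑ i, c i / (t + x i)`, and
comparing the coefficients of `X ^ (n - 1)` gives `∑ i, c i = ∑ i, x i = 1`. Hence the integrand is
`∑ i, c i * ((t + 1)⁻¹ - (t + x i)⁻¹)`, whose `i`-th term integrates to `c i * log (x i)` since
`log (t + 1) - log (t + x i)` is an antiderivative vanishing at infinity.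
-/

namespace Lagrange

open Polynomial

variable {F ι : Type*} [Field F] {s : Finset ι} {v : ι → F}

theorem degree_X_pow_sub_nodal_lt (s : Finset ι) (v : ι → F) :
    (X ^ #s - nodal s v).degree < (#s : WithBot ℕ) := by
  have h := degree_sub_lt_left (p := X ^ #s) (q := nodal s v)
    (by rw [degree_X_pow, degree_nodal]) (monic_X_pow _).ne_zero
    (by rw [leadingCoeff_X_pow, nodal_monic.leadingCoeff])
  rwa [degree_X_pow] at h

theorem eval_X_pow_sub_nodal_at_node {i : ι} (hi : i ∈ s) :
    (X ^ #s - nodal s v).eval (v i) = v i ^ #s := by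
  rw [eval_sub, eval_nodal_at_node hi, eval_pow, eval_X, sub_zero]

variable [DecidableEq ι]

theorem pow_card_div_eval_nodal (hvs : Set.InjOn v s) {x : F} (hx : ∀ i ∈ s, x ≠ v i) :
    x ^ #s / (nodal s v).eval x =
      1 + ∑ i ∈ s, (v i ^ #s / ∏ j ∈ s.erase i, (v i - v j)) / (x - v i) := by
  have hP := eq_interpolate hvs (degree_X_pow_sub_nodal_lt s v)
  have hPx := congrArg (eval x) hP
  rw [eval_interpolate_not_at_node _ hx, eval_sub, eval_pow, eval_X] at hPx
  have hnodal : (nodal s v).eval x ≠ 0 := eval_nodal_not_at_node hx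
  rw [sub_eq_iff_eq_add'] at hPx
  rw [hPx, add_div, div_self hnodal, mul_div_cancel_left₀ _ hnodal]
  congr 1
  refine Finset.sum_congr rfl fun i hi => ?_
  rw [eval_X_pow_sub_nodal_at_node hi, nodalWeight, prod_inv_distrib]
  ring

theorem sum_pow_card_div_prod_sub_eq_sum (hvs : Set.InjOn v s) :
    ∑ i ∈ s, v i ^ #s / ∏ j ∈ s.erase i, (v i - v j) = ∑ i ∈ s, v i := by
  obtain rfl | hs := s.eq_empty_or_nonempty
  · simp
  have hcard : #s ≠ 0 := hs.card_pos.ne'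
  have h := coeff_eq_sum hvs (degree_X_pow_sub_nodal_lt s v)
  have hnext : (nodal s v).coeff (#s - 1) = -∑ i ∈ s, v i := by
    rw [← prod_X_sub_C_nextCoeff, ← nodal, nextCoeff_of_natDegree_pos, natDegree_nodal]
    rw [natDegree_nodal]; omega
  rw [coeff_sub, coeff_X_pow, if_neg (by omega), hnext, zero_sub, neg_neg] at h
  rw [h]
  exact Finset.sum_congr rfl fun i hi => by rw [eval_X_pow_sub_nodal_at_node hi]

theorem pow_card_div_prod_add (hvs : Set.InjOn v s) {t : F} (ht : ∀ i ∈ s, t + v i ≠ 0) :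
    t ^ #s / ∏ i ∈ s, (t + v i) =
      1 - ∑ i ∈ s, (v i ^ #s / ∏ j ∈ s.erase i, (v i - v j)) / (t + v i) := by
  have hx : ∀ i ∈ s, -t ≠ v i := fun i hi h => ht i hi (by rw [← h]; ring)
  have h := pow_card_div_eval_nodal hvs hx
  have hneg : ∀ i, -t - v i = -(t + v i) := fun i => by ring
  simp_rw [eval_nodal, hneg, div_neg] at h
  rwa [prod_neg, neg_pow t, mul_div_mul_left _ _ (pow_ne_zero _ (neg_ne_zero.2 one_ne_zero)),
    sum_neg_distrib, ← sub_eq_add_neg] at h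

end Lagrange

namespace Real

open Filter Topology Set

theorem tendsto_log_add_one_sub_log_add_atTop (a : ℝ) :
    Tendsto (fun t => log (t + 1) - log (t + a)) atTop (𝓝 0) := by
  simpa using (tendsto_log_comp_add_sub_log 1).sub (tendsto_log_comp_add_sub_log a)

theorem hasDerivAt_log_add_one_sub_log_add {a t : ℝ} (ha : 0 < a) (ht : 0 ≤ t) :
    HasDerivAt (fun t => log (t + 1) - log (t + a)) ((t + 1)⁻¹ - (t + a)⁻¹) t := by
  have h1 : HasDerivAt (fun t => log (t + 1)) (t + 1)⁻¹ t := by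
    simpa using ((hasDerivAt_id t).add_const 1).log (by positivity)
  have h2 : HasDerivAt (fun t => log (t + a)) (t + a)⁻¹ t := by
    simpa using ((hasDerivAt_id t).add_const a).log (by positivity)
  exact h1.sub h2

theorem integrableOn_Ioi_inv_add_one_sub_inv_add {a : ℝ} (ha : 0 < a) :
    IntegrableOn (fun t => (t + 1)⁻¹ - (t + a)⁻¹) (Ioi 0) := by
  have hderiv : ∀ t ∈ Ici (0 : ℝ), HasDerivAt (fun t => log (t + 1) - log (t + a))
      ((t + 1)⁻¹ - (t + a)⁻¹) t := fun t ht => hasDerivAt_log_add_one_sub_log_add ha ht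
  rcases le_total 1 a with h1a | ha1
  · refine integrableOn_Ioi_deriv_of_nonneg' hderiv (fun t ht => ?_)
      (tendsto_log_add_one_sub_log_add_atTop a)
    have : 0 < t := ht
    rw [sub_nonneg]; gcongr
  · refine integrableOn_Ioi_deriv_of_nonpos' hderiv (fun t ht => ?_)
      (tendsto_log_add_one_sub_log_add_atTop a)
    have : 0 < t := ht
    rw [sub_nonpos]; gcongr

theorem integral_Ioi_inv_add_one_sub_inv_add {a : ℝ} (ha : 0 < a) :
    ∫ t in Ioi 0, ((t + 1)⁻¹ - (t + a)⁻¹) = log a := by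
  rw [integral_Ioi_of_hasDerivAt_of_tendsto' (fun t ht => hasDerivAt_log_add_one_sub_log_add ha ht)
    (integrableOn_Ioi_inv_add_one_sub_inv_add ha) (tendsto_log_add_one_sub_log_add_atTop a)]
  simp

end Real

theorem stmt_17 (n : ℕ) (x : Fin n → ℝ)
    (hx : ∀ i, 0 < x i)
    (hdist : ∀ i j, i ≠ j → x i ≠ x j)
    (hsum : ∑ i, x i = 1) :
    subentropy n x =
      -∫ t in Set.Ioi (0 : ℝ), (t ^ n / ∏ j, (t + x j) - t / (1 + t)) := by
  have hinj : Set.InjOn x (univ : Finset (Fin n)) :=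
    fun i _ j _ hij => not_imp_not.1 (hdist i j) hij
  set c := fun i => x i ^ n / ∏ j ∈ univ.erase i, (x i - x j)
  have hc_sum : ∑ i, c i = 1 := by
    simpa [hsum] using Lagrange.sum_pow_card_div_prod_sub_eq_sum hinj
  have hintegrand : ∀ t ∈ Set.Ioi (0 : ℝ),
      t ^ n / ∏ j, (t + x j) - t / (1 + t) = ∑ i, c i * ((t + 1)⁻¹ - (t + x i)⁻¹) := by
    intro t (ht : 0 < t)
    have h := Lagrange.pow_card_div_prod_add hinj (t := t) fun i _ => (add_pos ht (hx i)).ne'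
    rw [card_fin] at h
    calc t ^ n / ∏ j, (t + x j) - t / (1 + t) = 1 - ∑ i, c i / (t + x i) - t / (1 + t) := by
          rw [h]
      _ = (∑ i, c i) * (t + 1)⁻¹ - ∑ i, c i / (t + x i) := by
          rw [hc_sum]; field_simp; ring
      _ = ∑ i, c i * ((t + 1)⁻¹ - (t + x i)⁻¹) := by
          simp_rw [mul_sub, sum_sub_distrib, sum_mul, div_eq_mul_inv]
  rw [setIntegral_congr_fun measurableSet_Ioi hintegrand, integral_finsetSum _
    fun i _ => (Real.integrableOn_Ioi_inv_add_one_sub_inv_add (hx i)).const_mul (c i)]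
  rw [sum_congr rfl fun i _ => by
    rw [integral_const_mul, Real.integral_Ioi_inv_add_one_sub_inv_add (hx i)]]
  rfl
end
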